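/- arXiv:1001.4013 — 3 statements merged into one kernel-verified Lean document; each statement's English description precedes it below -/
import Mathlib

section
/- Let a < b be real numbers and let α > 0. The left Liouville fractional integral operator I_{a+}^α is injective on L²(a,b): if f ∈ L²(a,b) satisfies I_{a+}^α f = 0 almost everywhere on (a,b), then f = 0 almost everywhere on (a,b). The same holds for the right fractional integral I_{b-}^α. -/
/-!
Test `I_{a+}^α f = 0` against the polynomials `(b - t) ^ k`. Fubini gives the fractional
integration by parts `∫ φ · I_{a+}^α f = ∫ f · I_{b-}^α φ`, and a Beta integral gives
`I_{b-}^α (b - ·) ^ k = Γ(α)⁻¹ B(α, k + 1) (b - s) ^ (α + k)`, so all moments of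
`(b - s) ^ α f(s)` about `b` vanish. By Weierstrass approximation `(b - s) ^ α f` then
integrates to zero against every smooth compactly supported function, hence vanishes a.e., and
so does `f`. The reflection
`x ↦ a + b - x` exchanges `I_{a+}^α` and `I_{b-}^α`, which gives the right-sided statement.
-/

open MeasureTheory Set
open scoped NNReal ENNReal

/-- The left Liouville fractional integral of order `α` on `(a,·)`:
`(I_{a+}^α f)(t) = Γ(α)⁻¹ ∫_a^t (t-s)^(α-1) f(s) ds`. -/
noncomputable def leftFrac (a α : ℝ) (f : ℝ → ℝ) : ℝ → ℝ :=
  fun t => (Real.Gamma α)⁻¹ * ∫ s in Ioo a t, (t - s) ^ (α - 1) * f s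

/-- The right Liouville fractional integral of order `α` on `(·,b)`:
`(I_{b-}^α f)(t) = Γ(α)⁻¹ ∫_t^b (s-t)^(α-1) f(s) ds`. -/
noncomputable def rightFrac (b α : ℝ) (f : ℝ → ℝ) : ℝ → ℝ :=
  fun t => (Real.Gamma α)⁻¹ * ∫ s in Ioo t b, (s - t) ^ (α - 1) * f s

/-- Lebesgue measure restricted to the interval `(a,b)`, modelling `L²(a,b)`. -/
noncomputable def msr (a b : ℝ) : Measure ℝ := volume.restrict (Ioo a b)

section Moments

open Polynomial

variable {μ : Measure ℝ} {a b : ℝ} {h : ℝ → ℝ}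

theorem MeasureTheory.Integrable.continuous_mul_of_ae_mem_Icc (hμ : ∀ᵐ x ∂μ, x ∈ Icc a b)
    (hh : Integrable h μ) {g : ℝ → ℝ} (hg : Continuous g) :
    Integrable (fun x => g x * h x) μ := by
  obtain ⟨C, hC⟩ := isCompact_Icc.exists_bound_of_continuousOn hg.continuousOn
  exact hh.bdd_mul hg.aestronglyMeasurable (hμ.mono fun x hx => hC x hx)

theorem integral_eval_mul_eq_zero_of_moments (hμ : ∀ᵐ x ∂μ, x ∈ Icc a b)
    (hh : Integrable h μ) (c : ℝ) (hmom : ∀ k : ℕ, ∫ x, (c - x) ^ k * h x ∂μ = 0)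
    (p : ℝ[X]) : ∫ x, p.eval x * h x ∂μ = 0 := by
  set q := p.comp (C c - X)
  have hexpand (x : ℝ) : p.eval x * h x =
      ∑ i ∈ Finset.range (q.natDegree + 1), q.coeff i * ((c - x) ^ i * h x) := by
    have : p.eval x = q.eval (c - x) := by simp [q]
    rw [this, eval_eq_sum_range, Finset.sum_mul]
    exact Finset.sum_congr rfl fun i _ => mul_assoc _ _ _
  simp_rw [hexpand]
  rw [integral_finsetSum _ fun i _ =>
    (hh.continuous_mul_of_ae_mem_Icc hμ (by fun_prop)).const_mul _]
  simp [integral_const_mul, hmom]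

theorem ae_eq_zero_of_integral_eval_mul_eq_zero (hμ : ∀ᵐ x ∂μ, x ∈ Icc a b)
    (hh : Integrable h μ) (hpoly : ∀ p : ℝ[X], ∫ x, p.eval x * h x ∂μ = 0) :
    h =ᵐ[μ] 0 := by
  refine ae_eq_zero_of_integral_contDiff_smul_eq_zero hh.locallyIntegrable fun g hg _ => ?_
  set C := ∫ x, |h x| ∂μ
  refine eq_of_forall_dist_le fun ε hε => ?_
  obtain ⟨p, hp⟩ := exists_polynomial_near_of_continuousOn a b g hg.continuous.continuousOn
    (ε / (C + 1)) (by positivity)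
  have hgh := hh.continuous_mul_of_ae_mem_Icc hμ hg.continuous
  have hph := hh.continuous_mul_of_ae_mem_Icc hμ (p.continuous (R := ℝ))
  have hC : 0 ≤ C := integral_nonneg fun x => abs_nonneg _
  calc dist (∫ x, g x • h x ∂μ) 0
      = |∫ x, (g x - p.eval x) * h x ∂μ| := by
        simp_rw [sub_mul]
        rw [integral_sub hgh hph, hpoly, sub_zero, Real.dist_0_eq_abs]
        rfl
    _ ≤ ∫ x, ε / (C + 1) * |h x| ∂μ := by
        rw [← Real.norm_eq_abs]
        refine norm_integral_le_of_norm_le (hh.abs.const_mul _) ?_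
        filter_upwards [hμ] with x hx
        rw [norm_mul, Real.norm_eq_abs, abs_sub_comm]
        exact mul_le_mul_of_nonneg_right (hp x hx).le (abs_nonneg _)
    _ = ε * (C / (C + 1)) := by rw [integral_const_mul]; ring
    _ ≤ ε := mul_le_of_le_one_right hε.le ((div_le_one (by positivity)).2 (by linarith))

end Moments

section Beta

variable {α : ℝ}

/-- `eulerBeta α k = B(α, k + 1)`. -/
noncomputable def eulerBeta (α : ℝ) (k : ℕ) : ℝ :=
  ∫ v in (0 : ℝ)..1, v ^ (α - 1) * (1 - v) ^ k

theorem intervalIntegrable_sub_rpow_mul_sub_pow (hα : 0 < α) (k : ℕ) (s b : ℝ) :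
    IntervalIntegrable (fun t => (t - s) ^ (α - 1) * (b - t) ^ k) volume s b := by
  have := (intervalIntegral.intervalIntegrable_rpow' (a := 0) (b := b - s)
    (show -1 < α - 1 by linarith)).comp_sub_right s
  simp only [zero_add, sub_add_cancel] at this
  exact this.mul_continuousOn (by fun_prop)

theorem eulerBeta_pos (hα : 0 < α) (k : ℕ) : 0 < eulerBeta α k := by
  refine intervalIntegral.intervalIntegral_pos_of_pos_on ?_ (fun v hv => ?_) zero_lt_one
  · simpa using intervalIntegrable_sub_rpow_mul_sub_pow hα k 0 1
  · have := Real.rpow_pos_of_pos hv.1 (α - 1)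
    have := pow_pos (sub_pos.2 hv.2) k
    positivity

theorem integral_sub_rpow_mul_sub_pow (α : ℝ) (k : ℕ) {s b : ℝ} (hsb : s < b) :
    ∫ t in Ioo s b, (t - s) ^ (α - 1) * (b - t) ^ k =
      (b - s) ^ α * (b - s) ^ k * eulerBeta α k := by
  set d := b - s
  have hd : 0 < d := sub_pos.2 hsb
  have hsubst : ∀ v ∈ uIcc (0 : ℝ) 1, (s + d * v - s) ^ (α - 1) * (b - (s + d * v)) ^ k =
      d ^ (α - 1) * d ^ k * (v ^ (α - 1) * (1 - v) ^ k) := by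
    intro v hv
    rw [uIcc_of_le zero_le_one] at hv
    rw [add_sub_cancel_left, Real.mul_rpow hd.le hv.1,
      show b - (s + d * v) = d * (1 - v) by ring, mul_pow]
    ring
  have := intervalIntegral.smul_integral_comp_add_mul
    (fun t => (t - s) ^ (α - 1) * (b - t) ^ k) d s (a := 0) (b := 1)
  rw [mul_zero, add_zero, mul_one, add_sub_cancel, intervalIntegral.integral_congr hsubst,
    intervalIntegral.integral_const_mul, intervalIntegral.integral_of_le hsb.le,
    integral_Ioc_eq_integral_Ioo] at this
  rw [← this, smul_eq_mul, eulerBeta, Real.rpow_sub hd, Real.rpow_one]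
  field_simp

end Beta

section Kernel

variable {a b α : ℝ}

theorem ae_mem_msr (a b : ℝ) : ∀ᵐ x ∂msr a b, x ∈ Ioo a b :=
  self_mem_ae_restrict measurableSet_Ioo

instance isFiniteMeasure_msr (a b : ℝ) : IsFiniteMeasure (msr a b) :=
  isFiniteMeasure_restrict.2 measure_Ioo_lt_top.ne

theorem msr_restrict_Ioi {s : ℝ} (hs : a ≤ s) :
    (msr a b).restrict (Ioi s) = volume.restrict (Ioo s b) := by
  rw [msr, Measure.restrict_restrict measurableSet_Ioi, inter_comm, Ioo_inter_Ioi,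
    max_eq_right hs]

theorem msr_restrict_Iio {t : ℝ} (ht : t ≤ b) :
    (msr a b).restrict (Iio t) = volume.restrict (Ioo a t) := by
  rw [msr, Measure.restrict_restrict measurableSet_Iio, inter_comm, Ioo_inter_Iio,
    min_eq_right ht]

noncomputable def rlKernel (α s t : ℝ) : ℝ := if s < t then (t - s) ^ (α - 1) else 0

theorem rlKernel_nonneg (α s t : ℝ) : 0 ≤ rlKernel α s t := by
  unfold rlKernel
  split_ifs with h
  exacts [Real.rpow_nonneg (sub_pos.2 h).le _, le_rfl]

theorem measurable_rlKernel (α : ℝ) : Measurable fun p : ℝ × ℝ => rlKernel α p.1 p.2 :=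
  Measurable.ite (measurableSet_lt measurable_fst measurable_snd) (by fun_prop) measurable_const

theorem rlKernel_mul_eq_indicator_Iio (α t : ℝ) (g : ℝ → ℝ) :
    (fun s => rlKernel α s t * g s) = (Iio t).indicator fun s => (t - s) ^ (α - 1) * g s := by
  ext s
  by_cases h : s < t <;> simp [rlKernel, h]

theorem rlKernel_mul_eq_indicator_Ioi (α s : ℝ) (g : ℝ → ℝ) :
    (fun t => rlKernel α s t * g t) = (Ioi s).indicator fun t => (t - s) ^ (α - 1) * g t := by
  ext t
  by_cases h : s < t <;> simp [rlKernel, h]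

theorem integral_rlKernel_mul_left {t : ℝ} (ht : t ≤ b) (g : ℝ → ℝ) :
    ∫ s, rlKernel α s t * g s ∂msr a b = ∫ s in Ioo a t, (t - s) ^ (α - 1) * g s := by
  rw [rlKernel_mul_eq_indicator_Iio, integral_indicator measurableSet_Iio, msr_restrict_Iio ht]

theorem integral_rlKernel_mul_right {s : ℝ} (hs : a ≤ s) (g : ℝ → ℝ) :
    ∫ t, rlKernel α s t * g t ∂msr a b = ∫ t in Ioo s b, (t - s) ^ (α - 1) * g t := by
  rw [rlKernel_mul_eq_indicator_Ioi, integral_indicator measurableSet_Ioi, msr_restrict_Ioi hs]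

theorem integrable_rlKernel_right (hα : 0 < α) {s : ℝ} (hs : s ∈ Ioo a b) :
    Integrable (fun t => rlKernel α s t) (msr a b) := by
  have := rlKernel_mul_eq_indicator_Ioi α s 1
  simp only [Pi.one_apply, mul_one] at this
  rw [this, integrable_indicator_iff measurableSet_Ioi, IntegrableOn, msr_restrict_Ioi hs.1.le]
  refine IntegrableOn.mono_set ?_ Ioo_subset_Ioc_self
  simpa using (intervalIntegrable_sub_rpow_mul_sub_pow hα 0 s b).1

theorem integral_rlKernel_right {s : ℝ} (hs : s ∈ Ioo a b) :
    ∫ t, rlKernel α s t ∂msr a b = (b - s) ^ α * eulerBeta α 0 := by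
  simpa using (integral_rlKernel_mul_right (α := α) (b := b) hs.1.le 1).trans
    (integral_sub_rpow_mul_sub_pow α 0 hs.2)

theorem integrable_rlKernel_mul_fst (hα : 0 < α) {f : ℝ → ℝ} (hf : Integrable f (msr a b)) :
    Integrable (fun p : ℝ × ℝ => rlKernel α p.1 p.2 * f p.1) ((msr a b).prod (msr a b)) := by
  have hmeas : AEStronglyMeasurable (fun p : ℝ × ℝ => rlKernel α p.1 p.2 * f p.1)
      ((msr a b).prod (msr a b)) :=
    (measurable_rlKernel α).aestronglyMeasurable.mul hf.1.comp_fst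
  refine (integrable_prod_iff hmeas).2 ⟨?_, ?_⟩
  · filter_upwards [ae_mem_msr a b] with s hs
    exact (integrable_rlKernel_right hα hs).mul_const (f s)
  · refine (hf.norm.const_mul ((b - a) ^ α * eulerBeta α 0)).mono'
      hmeas.norm.integral_prod_right' ?_
    filter_upwards [ae_mem_msr a b] with s hs
    have hsection : ∫ t, ‖rlKernel α s t * f s‖ ∂msr a b =
        (b - s) ^ α * eulerBeta α 0 * ‖f s‖ := by
      simp_rw [norm_mul, Real.norm_of_nonneg (rlKernel_nonneg _ _ _)]
      rw [integral_mul_const, integral_rlKernel_right hs]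
    have hB := (eulerBeta_pos hα 0).le
    have hbs : 0 ≤ b - s := by linarith [hs.2]
    rw [hsection, Real.norm_of_nonneg (by positivity)]
    gcongr
    linarith [hs.1]

end Kernel

section Fractional

variable {a b α : ℝ} {f : ℝ → ℝ}

theorem integral_mul_leftFrac (hα : 0 < α) {φ : ℝ → ℝ} {M : ℝ}
    (hf : Integrable f (msr a b)) (hφ : AEStronglyMeasurable φ (msr a b))
    (hφM : ∀ᵐ t ∂msr a b, ‖φ t‖ ≤ M) :
    ∫ t, φ t * leftFrac a α f t ∂msr a b = ∫ s, f s * rightFrac b α φ s ∂msr a b := by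
  set F : ℝ × ℝ → ℝ := fun p => rlKernel α p.1 p.2 * (f p.1 * φ p.2)
  have hF : Integrable F ((msr a b).prod (msr a b)) := by
    refine ((integrable_rlKernel_mul_fst hα hf.norm).const_mul M).mono'
      ((measurable_rlKernel α).aestronglyMeasurable.mul (hf.1.comp_fst.mul hφ.comp_snd)) ?_
    filter_upwards [Measure.quasiMeasurePreserving_snd.ae hφM] with p hp
    rw [norm_mul, norm_mul, Real.norm_of_nonneg (rlKernel_nonneg _ _ _)]
    have := rlKernel_nonneg α p.1 p.2
    calc rlKernel α p.1 p.2 * (‖f p.1‖ * ‖φ p.2‖)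
        ≤ rlKernel α p.1 p.2 * (‖f p.1‖ * M) := by gcongr
      _ = M * (rlKernel α p.1 p.2 * ‖f p.1‖) := by ring
  have hleft : ∀ t ∈ Ioo a b,
      φ t * leftFrac a α f t = (Real.Gamma α)⁻¹ * ∫ s, F (s, t) ∂msr a b := by
    intro t ht
    rw [leftFrac, integral_rlKernel_mul_left ht.2.le]
    simp_rw [← mul_assoc, integral_mul_const]
    ring
  have hright : ∀ s ∈ Ioo a b,
      f s * rightFrac b α φ s = (Real.Gamma α)⁻¹ * ∫ t, F (s, t) ∂msr a b := by
    intro s hs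
    rw [rightFrac, integral_rlKernel_mul_right hs.1.le]
    simp_rw [mul_left_comm _ (f s), integral_const_mul]
    ring
  calc ∫ t, φ t * leftFrac a α f t ∂msr a b
      = ∫ t, (Real.Gamma α)⁻¹ * ∫ s, F (s, t) ∂msr a b ∂msr a b :=
        integral_congr_ae ((ae_mem_msr a b).mono hleft)
    _ = ∫ s, (Real.Gamma α)⁻¹ * ∫ t, F (s, t) ∂msr a b ∂msr a b := by
        simp_rw [integral_const_mul]
        rw [integral_integral_swap (f := fun t s => F (s, t)) hF.swap]
    _ = ∫ s, f s * rightFrac b α φ s ∂msr a b :=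
        (integral_congr_ae ((ae_mem_msr a b).mono hright)).symm

theorem rightFrac_sub_pow (k : ℕ) {s : ℝ} (hsb : s < b) :
    rightFrac b α (fun t => (b - t) ^ k) s =
      (Real.Gamma α)⁻¹ * eulerBeta α k * ((b - s) ^ k * (b - s) ^ α) := by
  rw [rightFrac, integral_sub_rpow_mul_sub_pow α k hsb]
  ring

theorem ae_eq_zero_of_leftFrac_ae_eq_zero (hα : 0 < α) (hf : Integrable f (msr a b))
    (h : leftFrac a α f =ᵐ[msr a b] 0) : f =ᵐ[msr a b] 0 := by
  have hIcc : ∀ᵐ s ∂msr a b, s ∈ Icc a b :=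
    (ae_mem_msr a b).mono fun _ hs => Ioo_subset_Icc_self hs
  set g : ℝ → ℝ := fun s => (b - s) ^ α * f s
  have hg : Integrable g (msr a b) := hf.continuous_mul_of_ae_mem_Icc hIcc
    ((Real.continuous_rpow_const hα.le).comp (continuous_const.sub continuous_id))
  have hmom (k : ℕ) : ∫ s, (b - s) ^ k * g s ∂msr a b = 0 := by
    obtain ⟨M, hM⟩ := (isCompact_Icc (a := a) (b := b)).exists_bound_of_continuousOn
      (f := fun t => (b - t) ^ k) (by fun_prop)
    have hdual : (Real.Gamma α)⁻¹ * eulerBeta α k * ∫ s, (b - s) ^ k * g s ∂msr a b =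
        ∫ s, f s * rightFrac b α (fun t => (b - t) ^ k) s ∂msr a b := by
      rw [← integral_const_mul]
      refine integral_congr_ae ((ae_mem_msr a b).mono fun s hs => ?_)
      dsimp only
      rw [rightFrac_sub_pow k hs.2]
      ring
    rw [← integral_mul_leftFrac hα hf (by fun_prop) (hIcc.mono hM),
      integral_eq_zero_of_ae (f := fun t => (b - t) ^ k * leftFrac a α f t)
        (h.mono fun t ht => by simp [ht])] at hdual
    have hc : (Real.Gamma α)⁻¹ * eulerBeta α k ≠ 0 :=
      mul_ne_zero (inv_ne_zero (Real.Gamma_pos_of_pos hα).ne') (eulerBeta_pos hα k).ne'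
    exact (mul_eq_zero.1 hdual).resolve_left hc
  filter_upwards [ae_eq_zero_of_integral_eval_mul_eq_zero hIcc hg
    (integral_eval_mul_eq_zero_of_moments hIcc hg b hmom), ae_mem_msr a b] with s hs hmem
  exact (mul_eq_zero.1 hs).resolve_left (Real.rpow_pos_of_pos (sub_pos.2 hmem.2) _).ne'

theorem measurePreserving_msr_reflect (a b : ℝ) :
    MeasurePreserving (fun x => a + b - x) (msr a b) (msr a b) := by
  have := (Measure.measurePreserving_sub_left volume (a + b)).restrict_preimage
    (measurableSet_Ioo (a := a) (b := b))
  rwa [preimage_const_sub_Ioo, add_sub_cancel_right, add_sub_cancel_left] at this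

theorem rightFrac_eq_leftFrac_reflect (t : ℝ) :
    rightFrac b α f t = leftFrac a α (fun s => f (a + b - s)) (a + b - t) := by
  have := (Measure.measurePreserving_sub_left volume (a + b)).setIntegral_preimage_emb
    (measurableEmbedding_subLeft (a + b)) (fun u => (u - t) ^ (α - 1) * f u) (Ioo t b)
  rw [preimage_const_sub_Ioo, add_sub_cancel_right] at this
  rw [rightFrac, leftFrac, ← this]
  simp_rw [sub_right_comm (a + b) t]

theorem ae_eq_zero_of_rightFrac_ae_eq_zero (hα : 0 < α) (hf : Integrable f (msr a b))
    (h : rightFrac b α f =ᵐ[msr a b] 0) : f =ᵐ[msr a b] 0 := by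
  have hR := measurePreserving_msr_reflect a b
  have hleft :
      leftFrac a α (fun s => f (a + b - s)) = fun t => rightFrac b α f (a + b - t) := by
    ext t
    rw [rightFrac_eq_leftFrac_reflect (a := a), sub_sub_cancel]
  have hfR : (fun s => f (a + b - s)) =ᵐ[msr a b] 0 := ae_eq_zero_of_leftFrac_ae_eq_zero hα
    ((hR.integrable_comp hf.1).2 hf) (hleft ▸ hR.quasiMeasurePreserving.ae_eq_comp h)
  have hff := hR.quasiMeasurePreserving.ae_eq_comp hfR
  simp only [Function.comp_def, sub_sub_cancel, Pi.zero_apply] at hff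
  exact hff

end Fractional

theorem fractional_integrals_injective_on_L2_general (a b α : ℝ) (hα : 0 < α)
    (f : ℝ → ℝ) (hf : MemLp f 2 (msr a b)) :
    (leftFrac a α f =ᵐ[msr a b] 0 → f =ᵐ[msr a b] 0) ∧
    (rightFrac b α f =ᵐ[msr a b] 0 → f =ᵐ[msr a b] 0) :=
  ⟨ae_eq_zero_of_leftFrac_ae_eq_zero hα (hf.integrable one_le_two),
    ae_eq_zero_of_rightFrac_ae_eq_zero hα (hf.integrable one_le_two)⟩

theorem fractional_integrals_injective_on_L2 (a b α : ℝ) (hab : a < b) (hα : 0 < α)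
    (f : ℝ → ℝ) (hf : MemLp f 2 (msr a b)) :
    (leftFrac a α f =ᵐ[msr a b] 0 → f =ᵐ[msr a b] 0) ∧
    (rightFrac b α f =ᵐ[msr a b] 0 → f =ᵐ[msr a b] 0) :=
  fractional_integrals_injective_on_L2_general a b α hα f hf
end

section
/- Let a < b be real numbers and let 0 < α < 1/2. For a < y ≤ b define g_y(t) := Γ(1-α)^{-1} (y-t)^{-α} 1_{(a,y)}(t) for t ∈ (a,b). Then g_y ∈ L²(a,b) and I_{b-}^α g_y = 1_{(a,y)} almost everywhere on (a,b); that is, (I_{b-}^α g_y)(t) = 1 for almost every t ∈ (a,y) and (I_{b-}^α g_y)(t) = 0 for almost every t ∈ [y,b). In particular, every indicator function 1_{[x,y)} with a ≤ x < y ≤ b belongs to the range I_{b-}^α(L²(a,b)). -/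
open MeasureTheory Set
open scoped NNReal ENNReal

/-- The function `g_y(t) = Γ(1-α)⁻¹ (y-t)^(-α) 1_{(a,y)}(t)`. -/
noncomputable def gy (a α y : ℝ) : ℝ → ℝ :=
  fun t => (Real.Gamma (1 - α))⁻¹ * (Ioo a y).indicator (fun t => (y - t) ^ (-α)) t

/-!
Up to the factor `Γ(1-α)⁻¹`, `gy a α y` is the kernel `(y - ·)^(-α)` on `(a, y)`. For `t < y`,
`∫_t^y (s-t)^(α-1) (y-s)^(-α) ds` is the Beta integral `B(α, 1-α) = Γ(α) Γ(1-α)`, which cancels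
both Gamma factors, while for `t ≥ y` the supports are disjoint. Square integrability of `gy` is
exactly `2α < 1`, and `1_{[x,y)}` is the image of `gy a α y - gy a α x` by linearity.
-/

theorem Real.integral_rpow_mul_one_sub_rpow {p q : ℝ} (hp : 0 < p) (hq : 0 < q) :
    ∫ x in (0 : ℝ)..1, x ^ (p - 1) * (1 - x) ^ (q - 1) =
      Real.Gamma p * Real.Gamma q / Real.Gamma (p + q) := by
  have hΓ : Complex.Gamma (p + q : ℝ) ≠ 0 := by
    rw [Complex.Gamma_ofReal]
    exact_mod_cast (Real.Gamma_pos_of_pos (add_pos hp hq)).ne'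
  have hbeta : Complex.betaIntegral p q =
      ((∫ x in (0 : ℝ)..1, x ^ (p - 1) * (1 - x) ^ (q - 1) : ℝ) : ℂ) := by
    rw [Complex.betaIntegral, ← intervalIntegral.integral_ofReal]
    refine intervalIntegral.integral_congr fun x hx => ?_
    rw [uIcc_of_le zero_le_one] at hx
    simp only [Complex.ofReal_mul, Complex.ofReal_cpow hx.1,
      Complex.ofReal_cpow (sub_nonneg.2 hx.2), Complex.ofReal_sub, Complex.ofReal_one]
  rw [← Complex.ofReal_inj, ← hbeta, Complex.ofReal_div, Complex.ofReal_mul,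
    ← Complex.Gamma_ofReal, ← Complex.Gamma_ofReal, ← Complex.Gamma_ofReal, eq_div_iff hΓ,
    Complex.Gamma_mul_Gamma_eq_betaIntegral (by simpa) (by simpa), Complex.ofReal_add, mul_comm]

theorem integral_sub_rpow_mul_sub_rpow {p q t y : ℝ} (hp : 0 < p) (hq : 0 < q) (hty : t < y) :
    ∫ s in t..y, (s - t) ^ (p - 1) * (y - s) ^ (q - 1) =
      (y - t) ^ (p + q - 1) * (Real.Gamma p * Real.Gamma q / Real.Gamma (p + q)) := by
  have hd : 0 < y - t := sub_pos.2 hty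
  have hsubst := intervalIntegral.smul_integral_comp_add_mul (E := ℝ) (a := 0) (b := 1)
    (fun s => (s - t) ^ (p - 1) * (y - s) ^ (q - 1)) (y - t) t
  simp only [mul_zero, add_zero, mul_one, add_sub_cancel, smul_eq_mul] at hsubst
  rw [← hsubst, ← Real.integral_rpow_mul_one_sub_rpow hp hq, ← intervalIntegral.integral_const_mul,
    ← intervalIntegral.integral_const_mul]
  refine intervalIntegral.integral_congr fun x hx => ?_
  rw [uIcc_of_le zero_le_one] at hx
  have hleft : t + (y - t) * x - t = (y - t) * x := by ring
  have hright : y - (t + (y - t) * x) = (y - t) * (1 - x) := by ring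
  simp only [hleft, hright, Real.mul_rpow hd.le hx.1, Real.mul_rpow hd.le (sub_nonneg.2 hx.2)]
  rw [show p + q - 1 = 1 + (p - 1) + (q - 1) by ring, Real.rpow_add hd, Real.rpow_add hd,
    Real.rpow_one]
  ring

section Kernel

variable {α t y : ℝ}

theorem integral_Ioo_sub_rpow_mul_sub_rpow_neg (hα : 0 < α) (hα1 : α < 1) (hty : t < y) :
    ∫ s in Ioo t y, (s - t) ^ (α - 1) * (y - s) ^ (-α) = Real.Gamma α * Real.Gamma (1 - α) := by
  have h := integral_sub_rpow_mul_sub_rpow hα (sub_pos.2 hα1) hty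
  rwa [intervalIntegral.integral_of_le hty.le, integral_Ioc_eq_integral_Ioo, sub_sub_cancel_left,
    add_sub_cancel, sub_self, Real.rpow_zero, one_mul, Real.Gamma_one, div_one] at h

theorem integrableOn_Ioo_sub_rpow_mul_sub_rpow_neg (hα : 0 < α) (hα1 : α < 1) :
    IntegrableOn (fun s => (s - t) ^ (α - 1) * (y - s) ^ (-α)) (Ioo t y) := by
  rcases lt_or_ge t y with hty | hyt
  · -- a function with nonzero Bochner integral is integrable
    refine Integrable.of_integral_ne_zero ?_
    rw [integral_Ioo_sub_rpow_mul_sub_rpow_neg hα hα1 hty]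
    exact mul_ne_zero (Real.Gamma_pos_of_pos hα).ne' (Real.Gamma_pos_of_pos (sub_pos.2 hα1)).ne'
  · rw [Ioo_eq_empty hyt.not_gt]
    exact integrableOn_empty

end Kernel

theorem restrict_Ioo_restrict_Ioo_of_le {μ : Measure ℝ} {a b t y : ℝ} (hat : a ≤ t) (hyb : y ≤ b) :
    (μ.restrict (Ioo t b)).restrict (Ioo a y) = μ.restrict (Ioo t y) := by
  rw [Measure.restrict_restrict measurableSet_Ioo, Ioo_inter_Ioo, max_eq_right hat,
    min_eq_left hyb]

theorem rightFrac_sub {b α t : ℝ} {f g : ℝ → ℝ}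
    (hf : IntegrableOn (fun s => (s - t) ^ (α - 1) * f s) (Ioo t b))
    (hg : IntegrableOn (fun s => (s - t) ^ (α - 1) * g s) (Ioo t b)) :
    rightFrac b α (f - g) t = rightFrac b α f t - rightFrac b α g t := by
  simp only [rightFrac, Pi.sub_apply, mul_sub]
  rw [integral_sub hf hg, mul_sub]

section Gy

variable {a b α y t : ℝ}

theorem memLp_gy (hα : α < 1 / 2) : MemLp (gy a α y) 2 := by
  refine MemLp.const_mul ?_ _
  rw [memLp_indicator_iff_restrict measurableSet_Ioo,
    memLp_two_iff_integrable_sq (by fun_prop : Measurable _).aestronglyMeasurable]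
  have hint : IntervalIntegrable (fun t => (y - t) ^ (-α * 2)) volume a y := by
    simpa using ((intervalIntegral.intervalIntegrable_rpow' (a := 0) (b := y - a)
      (by linarith : (-1 : ℝ) < -α * 2)).comp_sub_left y).symm
  refine (hint.def'.mono_set (Ioo_subset_Ioc_self.trans Ioc_subset_uIoc)).congr_fun
    (fun t ht => ?_) measurableSet_Ioo
  exact Real.rpow_mul_natCast (sub_pos.2 ht.2).le _ 2

theorem rpow_sub_mul_gy (t s : ℝ) :
    (s - t) ^ (α - 1) * gy a α y s = (Real.Gamma (1 - α))⁻¹ *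
      (Ioo a y).indicator (fun s => (s - t) ^ (α - 1) * (y - s) ^ (-α)) s := by
  rw [gy, indicator_mul_right _ (fun s => (s - t) ^ (α - 1))]
  ring

theorem integral_rpow_sub_mul_gy (hat : a ≤ t) (hyb : y ≤ b) :
    ∫ s in Ioo t b, (s - t) ^ (α - 1) * gy a α y s =
      (Real.Gamma (1 - α))⁻¹ * ∫ s in Ioo t y, (s - t) ^ (α - 1) * (y - s) ^ (-α) := by
  simp_rw [rpow_sub_mul_gy t]
  rw [integral_const_mul, integral_indicator measurableSet_Ioo,
    restrict_Ioo_restrict_Ioo_of_le hat hyb]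

theorem integrableOn_rpow_sub_mul_gy (hα : 0 < α) (hα1 : α < 1) (hat : a ≤ t) (hyb : y ≤ b) :
    IntegrableOn (fun s => (s - t) ^ (α - 1) * gy a α y s) (Ioo t b) := by
  simp_rw [rpow_sub_mul_gy t]
  refine Integrable.const_mul ?_ _
  rw [integrable_indicator_iff measurableSet_Ioo, IntegrableOn,
    restrict_Ioo_restrict_Ioo_of_le hat hyb]
  exact integrableOn_Ioo_sub_rpow_mul_sub_rpow_neg hα hα1

theorem rightFrac_gy (hα : 0 < α) (hα1 : α < 1) (hat : a ≤ t) (hyb : y ≤ b) :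
    rightFrac b α (gy a α y) t = (Iio y).indicator 1 t := by
  rw [rightFrac, integral_rpow_sub_mul_gy hat hyb]
  rcases lt_or_ge t y with hty | hyt
  · have hΓ := (Real.Gamma_pos_of_pos hα).ne'
    have hΓ' := (Real.Gamma_pos_of_pos (sub_pos.2 hα1)).ne'
    rw [indicator_of_mem (mem_Iio.2 hty), integral_Ioo_sub_rpow_mul_sub_rpow_neg hα hα1 hty,
      Pi.one_apply]
    field_simp
  · rw [indicator_of_notMem (notMem_Iio.2 hyt), Ioo_eq_empty hyt.not_gt, setIntegral_empty,
      mul_zero, mul_zero]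

end Gy

theorem rightFrac_gy_eq_indicator_general (a b α : ℝ)
    (hα : 0 < α) (hα' : α < 1/2) :
    (∀ y : ℝ, a < y → y ≤ b →
      MemLp (gy a α y) 2 (msr a b) ∧
      ∀ᵐ t ∂(msr a b),
        (t < y → rightFrac b α (gy a α y) t = 1) ∧
        (y ≤ t → rightFrac b α (gy a α y) t = 0)) ∧
    -- In particular, every indicator `1_{[x,y)}` with `a ≤ x < y ≤ b` belongs to
    -- the range `I_{b-}^α (L²(a,b))`.
    (∀ x y : ℝ, a ≤ x → x < y → y ≤ b →
      ∃ g : ℝ → ℝ, MemLp g 2 (msr a b) ∧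
        (Ico x y).indicator (fun _ => (1 : ℝ)) =ᵐ[msr a b] rightFrac b α g) := by
  have hα1 : α < 1 := by linarith
  have hmem : ∀ᵐ t ∂(msr a b), t ∈ Ioo a b := ae_restrict_mem measurableSet_Ioo
  refine ⟨fun y _ hyb => ⟨(memLp_gy hα').restrict _, ?_⟩, fun x y _ hxy hyb => ?_⟩
  · filter_upwards [hmem] with t ht
    rw [rightFrac_gy hα hα1 ht.1.le hyb]
    exact ⟨fun hty => indicator_of_mem (mem_Iio.2 hty) _,
      fun hyt => indicator_of_notMem (notMem_Iio.2 hyt) _⟩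
  · have hxb := hxy.le.trans hyb
    refine ⟨gy a α y - gy a α x, ((memLp_gy hα').sub (memLp_gy hα')).restrict _, ?_⟩
    filter_upwards [hmem] with t ht
    rw [rightFrac_sub (integrableOn_rpow_sub_mul_gy hα hα1 ht.1.le hyb)
      (integrableOn_rpow_sub_mul_gy hα hα1 ht.1.le hxb), rightFrac_gy hα hα1 ht.1.le hyb,
      rightFrac_gy hα hα1 ht.1.le hxb, ← Iio_sdiff_Iio, indicator_sdiff (Iio_subset_Iio hxy.le)]
    rfl

theorem rightFrac_gy_eq_indicator (a b α : ℝ) (hab : a < b)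
    (hα : 0 < α) (hα' : α < 1/2) :
    (∀ y : ℝ, a < y → y ≤ b →
      MemLp (gy a α y) 2 (msr a b) ∧
      ∀ᵐ t ∂(msr a b),
        (t < y → rightFrac b α (gy a α y) t = 1) ∧
        (y ≤ t → rightFrac b α (gy a α y) t = 0)) ∧
    -- In particular, every indicator `1_{[x,y)}` with `a ≤ x < y ≤ b` belongs to
    -- the range `I_{b-}^α (L²(a,b))`.
    (∀ x y : ℝ, a ≤ x → x < y → y ≤ b →
      ∃ g : ℝ → ℝ, MemLp g 2 (msr a b) ∧
        (Ico x y).indicator (fun _ => (1 : ℝ)) =ᵐ[msr a b] rightFrac b α g) :=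
  rightFrac_gy_eq_indicator_general a b α hα hα'
end

section
/- (Itô isometry for Liouville fBm, case 1/2 < β < 1.) Let T > 0 and 1/2 < β < 1. (a) For all s,t ∈ [0,T], the L²(0,T) inner product satisfies ⟨ I_{T-}^{β-1/2} 1_{(0,s)}, I_{T-}^{β-1/2} 1_{(0,t)} ⟩_{L²(0,T)} = Γ^β_{s,t}. (b) Consequently, if (Ω, F, P) is a probability space carrying random variables W(t) ∈ L²(Ω), t ∈ [0,T], with E[W(t)] = 0 and E[W(s)W(t)] = Γ^β_{s,t} for all s,t ∈ [0,T], then for every step function f = Σ_{j=1}^N c_j 1_{(a_j,b_j]} with 0 ≤ a_j < b_j ≤ T and c_j ∈ ℝ, E| Σ_{j=1}^N c_j ( W(b_j) − W(a_j) ) |² = ‖ I_{T-}^{β-1/2} f ‖²_{L²(0,T)}. -/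
open MeasureTheory Set
open scoped NNReal ENNReal

/-- The Liouville fBm covariance
`Γ^β_{s,t} = Γ(β+1/2)⁻² ∫_0^{s∧t} (s-u)^(β-1/2) (t-u)^(β-1/2) du`. -/
noncomputable def fbmCov (β s t : ℝ) : ℝ :=
  ((Real.Gamma (β + 1/2)) ^ 2)⁻¹ *
    ∫ u in Ioo 0 (min s t), (s - u) ^ (β - 1/2) * (t - u) ^ (β - 1/2)

/-! The fractional integral of an indicator is explicit: for `a ≤ b ≤ T`,
`I_{T-}^α 1_{(a,b]}(u) = ((b - u)₊^α - (a - u)₊^α) / Γ(α + 1)`. With `α = β - 1/2`, the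
`L²(0,T)` inner product of two kernels `(s - ·)₊^α`, `(t - ·)₊^α` is the integral defining
`Γ^β_{s,t}`, which is (a). For (b), both sides are the same quadratic form `∑ c_i c_j G_{ij}` in
the Gram matrix of the increments, once in `L²(P)` and once in `L²(0,T)`, and these Gram matrices
agree because the covariances of `W` and of the kernels do. -/

noncomputable def liouvilleKernel (α t u : ℝ) : ℝ := (max (t - u) 0) ^ α / Real.Gamma (α + 1)

section Kernel

variable {α t u : ℝ}

lemma liouvilleKernel_of_le (hα : 0 < α) (h : t ≤ u) : liouvilleKernel α t u = 0 := by
  rw [liouvilleKernel, max_eq_right (by linarith), Real.zero_rpow hα.ne', zero_div]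

lemma liouvilleKernel_of_ge (h : u ≤ t) :
    liouvilleKernel α t u = (t - u) ^ α / Real.Gamma (α + 1) := by
  rw [liouvilleKernel, max_eq_left (by linarith)]

lemma antitone_liouvilleKernel (hα : 0 ≤ α) (t : ℝ) : Antitone (liouvilleKernel α t) := by
  intro u v huv
  unfold liouvilleKernel
  gcongr

lemma memLp_liouvilleKernel (hα : 0 ≤ α) (t : ℝ) (p : ℝ≥0∞) (a b : ℝ) :
    MemLp (liouvilleKernel α t) p (volume.restrict (Ioo a b)) :=
  ((antitone_liouvilleKernel hα t).antitoneOn _).memLp_isCompact isCompact_Icc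
    |>.mono_measure (Measure.restrict_mono Ioo_subset_Icc_self le_rfl)

end Kernel

lemma integral_Ioc_sub_rpow {α u x y : ℝ} (hα : 0 < α) (hxy : x ≤ y) :
    ∫ s in Ioc x y, (s - u) ^ (α - 1) = ((y - u) ^ α - (x - u) ^ α) / α := by
  rw [← intervalIntegral.integral_of_le hxy,
    intervalIntegral.integral_comp_sub_right (fun s => s ^ (α - 1)),
    integral_rpow (Or.inl (by linarith)), sub_add_cancel]

lemma integrableOn_sub_rpow_mul_indicator {α : ℝ} (hα : 0 < α) (u b : ℝ) {S : Set ℝ}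
    (hS : MeasurableSet S) :
    IntegrableOn (fun s => (s - u) ^ (α - 1) * S.indicator (fun _ => (1 : ℝ)) s) (Ioo u b) := by
  have h := (intervalIntegral.intervalIntegrable_rpow' (r := α - 1) (by linarith)
    (a := 0) (b := b - u)).comp_sub_right u
  simp only [zero_add, sub_add_cancel] at h
  simp_rw [← indicator_mul_right _ (fun s => (s - u) ^ (α - 1)), mul_one]
  exact (h.1.mono_set Ioo_subset_Ioc_self).indicator hS

lemma rightFrac_congr_ae {b α : ℝ} {f g : ℝ → ℝ} (h : f =ᵐ[volume] g) :
    rightFrac b α f = rightFrac b α g := by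
  funext t
  unfold rightFrac
  congr 1
  exact integral_congr_ae (ae_restrict_of_ae (h.mono fun s hs => by simp only [hs]))

lemma rightFrac_sum {ι : Type*} (s : Finset ι) {b α t : ℝ} (c : ι → ℝ) (f : ι → ℝ → ℝ)
    (hf : ∀ i ∈ s, IntegrableOn (fun x => (x - t) ^ (α - 1) * f i x) (Ioo t b)) :
    rightFrac b α (fun x => ∑ i ∈ s, c i * f i x) t = ∑ i ∈ s, c i * rightFrac b α (f i) t := by
  unfold rightFrac
  simp_rw [Finset.mul_sum, mul_left_comm _ (c _)]
  rw [integral_finsetSum _ fun i hi => (hf i hi).const_mul (c i)]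
  simp_rw [integral_const_mul, Finset.mul_sum, mul_left_comm]

lemma rightFrac_indicator_Ioc {α T a b : ℝ} (hα : 0 < α) (hab : a ≤ b) (hbT : b ≤ T) (u : ℝ) :
    rightFrac T α ((Ioc a b).indicator fun _ => (1 : ℝ)) u =
      liouvilleKernel α b u - liouvilleKernel α a u := by
  unfold rightFrac
  simp_rw [← indicator_mul_right _ (fun s => (s - u) ^ (α - 1)), mul_one]
  rw [← integral_Ioc_eq_integral_Ioo, setIntegral_indicator measurableSet_Ioc, Ioc_inter_Ioc,
    min_eq_right hbT]
  rcases le_or_gt u b with hub | hbu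
  · have hΓ : Real.Gamma α ≠ 0 := (Real.Gamma_pos_of_pos hα).ne'
    have hmax : max u a - u = max (a - u) 0 := by
      rw [← max_sub_sub_right, sub_self, max_comm]
    rw [integral_Ioc_sub_rpow hα (max_le hub hab), hmax, liouvilleKernel,
      liouvilleKernel, max_eq_left (by linarith : 0 ≤ b - u), Real.Gamma_add_one hα.ne']
    field_simp
  · rw [Ioc_eq_empty (not_lt.2 (hbu.le.trans (le_max_left u a))), Measure.restrict_empty,
      integral_zero_measure, mul_zero, liouvilleKernel_of_le hα hbu.le,
      liouvilleKernel_of_le hα (hab.trans hbu.le), sub_zero]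

lemma rightFrac_indicator_Ioo {α T t u : ℝ} (hα : 0 < α) (ht : 0 ≤ t) (htT : t ≤ T)
    (hu : 0 ≤ u) :
    rightFrac T α ((Ioo 0 t).indicator fun _ => (1 : ℝ)) u = liouvilleKernel α t u := by
  rw [rightFrac_congr_ae (indicator_ae_eq_of_ae_eq_set Ioo_ae_eq_Ioc),
    rightFrac_indicator_Ioc hα ht htT, liouvilleKernel_of_le hα hu, sub_zero]

lemma rightFrac_sum_indicator_Ioc {ι : Type*} [Fintype ι] {α T : ℝ} (hα : 0 < α) (a b c : ι → ℝ)
    (hab : ∀ i, a i ≤ b i) (hbT : ∀ i, b i ≤ T) (u : ℝ) :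
    rightFrac T α (fun s => ∑ i, c i * (Ioc (a i) (b i)).indicator (fun _ => (1 : ℝ)) s) u =
      ∑ i, c i * (liouvilleKernel α (b i) u - liouvilleKernel α (a i) u) := by
  rw [rightFrac_sum _ c _ fun i _ => integrableOn_sub_rpow_mul_indicator hα u T measurableSet_Ioc]
  simp_rw [rightFrac_indicator_Ioc hα (hab _) (hbT _)]

lemma integral_liouvilleKernel_mul {α s t T : ℝ} (hα : 0 < α) (hsT : s ≤ T) :
    ∫ u in Ioo 0 T, liouvilleKernel α s u * liouvilleKernel α t u =
      (Real.Gamma (α + 1) ^ 2)⁻¹ * ∫ u in Ioo 0 (min s t), (s - u) ^ α * (t - u) ^ α := by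
  have hsub : Ioo 0 (min s t) ⊆ Ioo 0 T := Ioo_subset_Ioo_right ((min_le_left s t).trans hsT)
  rw [setIntegral_eq_of_subset_of_forall_sdiff_eq_zero measurableSet_Ioo hsub,
    ← integral_const_mul]
  · refine setIntegral_congr_fun measurableSet_Ioo fun u hu => ?_
    rw [liouvilleKernel_of_ge (hu.2.le.trans (min_le_left s t)),
      liouvilleKernel_of_ge (hu.2.le.trans (min_le_right s t))]
    ring
  · rintro u ⟨hu, hu'⟩
    rcases min_le_iff.mp (not_lt.mp fun h => hu' ⟨hu.1, h⟩) with h | h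
    · rw [liouvilleKernel_of_le hα h, zero_mul]
    · rw [liouvilleKernel_of_le hα h, mul_zero]

lemma integral_liouvilleKernel_mul_eq_fbmCov {β s t T : ℝ} (hβ : 1 / 2 < β) (hsT : s ≤ T) :
    ∫ u in Ioo 0 T, liouvilleKernel (β - 1 / 2) s u * liouvilleKernel (β - 1 / 2) t u =
      fbmCov β s t := by
  rw [integral_liouvilleKernel_mul (by linarith) hsT, fbmCov,
    show β - 1 / 2 + 1 = β + 1 / 2 by ring]

section Gram

variable {Ω : Type*} [MeasurableSpace Ω] {μ : Measure Ω}

lemma integral_sub_mul_sub {f g h k : Ω → ℝ} (hf : MemLp f 2 μ) (hg : MemLp g 2 μ)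
    (hh : MemLp h 2 μ) (hk : MemLp k 2 μ) :
    ∫ x, (f x - g x) * (h x - k x) ∂μ =
      ∫ x, f x * h x ∂μ - ∫ x, f x * k x ∂μ - (∫ x, g x * h x ∂μ - ∫ x, g x * k x ∂μ) := by
  have hfh : Integrable (fun x => f x * h x) μ := hf.integrable_mul hh
  have hfk : Integrable (fun x => f x * k x) μ := hf.integrable_mul hk
  have hgh : Integrable (fun x => g x * h x) μ := hg.integrable_mul hh
  have hgk : Integrable (fun x => g x * k x) μ := hg.integrable_mul hk
  simp_rw [sub_mul, mul_sub]
  rw [integral_sub (f := fun x => f x * h x - f x * k x)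
      (g := fun x => g x * h x - g x * k x) (hfh.sub hfk) (hgh.sub hgk),
    integral_sub hfh hfk, integral_sub hgh hgk]

lemma integral_sq_sum_mul {ι : Type*} [Fintype ι] {X : ι → Ω → ℝ} (hX : ∀ i, MemLp (X i) 2 μ)
    (c : ι → ℝ) :
    ∫ x, (∑ i, c i * X i x) ^ 2 ∂μ = ∑ i, ∑ j, c i * c j * ∫ x, X i x * X j x ∂μ := by
  have hint : ∀ i j, Integrable (fun x => c i * c j * (X i x * X j x)) μ :=
    fun i j => ((hX i).integrable_mul (hX j)).const_mul _
  have hsq : ∀ x, (∑ i, c i * X i x) ^ 2 = ∑ i, ∑ j, c i * c j * (X i x * X j x) := fun x => by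
    rw [sq, Finset.sum_mul_sum]
    simp_rw [mul_mul_mul_comm]
  simp_rw [hsq]
  rw [integral_finsetSum _ fun i _ => integrable_finsetSum _ fun j _ => hint i j]
  simp_rw [integral_finsetSum _ fun j _ => hint _ j, integral_const_mul]

lemma integral_sq_sum_increments_eq {τ Ω' : Type*} [MeasurableSpace Ω'] {ν : Measure Ω'}
    {S : Set τ} {X : τ → Ω → ℝ} {Y : τ → Ω' → ℝ}
    (hX : ∀ s ∈ S, MemLp (X s) 2 μ) (hY : ∀ s ∈ S, MemLp (Y s) 2 ν)
    (hXY : ∀ s ∈ S, ∀ t ∈ S, ∫ x, X s x * X t x ∂μ = ∫ y, Y s y * Y t y ∂ν)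
    {ι : Type*} [Fintype ι] {a b : ι → τ} (ha : ∀ i, a i ∈ S) (hb : ∀ i, b i ∈ S) (c : ι → ℝ) :
    ∫ x, (∑ i, c i * (X (b i) x - X (a i) x)) ^ 2 ∂μ =
      ∫ y, (∑ i, c i * (Y (b i) y - Y (a i) y)) ^ 2 ∂ν := by
  rw [integral_sq_sum_mul (X := fun i x => X (b i) x - X (a i) x)
      fun i => (hX _ (hb i)).sub (hX _ (ha i)),
    integral_sq_sum_mul (X := fun i y => Y (b i) y - Y (a i) y)
      fun i => (hY _ (hb i)).sub (hY _ (ha i))]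
  refine Finset.sum_congr rfl fun i _ => Finset.sum_congr rfl fun j _ => ?_
  rw [integral_sub_mul_sub (hX _ (hb i)) (hX _ (ha i)) (hX _ (hb j)) (hX _ (ha j)),
    integral_sub_mul_sub (hY _ (hb i)) (hY _ (ha i)) (hY _ (hb j)) (hY _ (ha j)),
    hXY _ (hb i) _ (hb j), hXY _ (hb i) _ (ha j), hXY _ (ha i) _ (hb j), hXY _ (ha i) _ (ha j)]

end Gram

theorem ito_isometry_liouville_fbm_large_hurst_general
    {Ω : Type*} [MeasurableSpace Ω] (P : Measure Ω)
    (T β : ℝ) (hβ : 1/2 < β)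
    (W : ℝ → Ω → ℝ)
    (hW2 : ∀ t ∈ Icc (0 : ℝ) T, MemLp (W t) 2 P)
    (hWcov : ∀ s ∈ Icc (0 : ℝ) T, ∀ t ∈ Icc (0 : ℝ) T,
      ∫ ω, W s ω * W t ω ∂P = fbmCov β s t) :
    -- (a) the L²(0,T) inner product of the fractional integrals of indicators
    -- reproduces the covariance
    (∀ s ∈ Icc (0 : ℝ) T, ∀ t ∈ Icc (0 : ℝ) T,
      ∫ u in Ioo 0 T,
        rightFrac T (β - 1/2) ((Ioo 0 s).indicator fun _ => (1 : ℝ)) u *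
        rightFrac T (β - 1/2) ((Ioo 0 t).indicator fun _ => (1 : ℝ)) u
        = fbmCov β s t) ∧
    -- (b) the Itô isometry for step functions
    (∀ (N : ℕ) (A B c : Fin N → ℝ), (∀ j, 0 ≤ A j ∧ A j < B j ∧ B j ≤ T) →
      ∫ ω, (∑ j, c j * (W (B j) ω - W (A j) ω)) ^ 2 ∂P =
        ∫ u in Ioo 0 T,
          (rightFrac T (β - 1/2)
            (fun s => ∑ j, c j * (Ioc (A j) (B j)).indicator (fun _ => (1 : ℝ)) s) u) ^ 2) := by
  have hα : 0 < β - 1 / 2 := by linarith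
  refine ⟨fun s hs t ht => ?_, fun N A B c hAB => ?_⟩
  · rw [← integral_liouvilleKernel_mul_eq_fbmCov hβ hs.2]
    refine setIntegral_congr_fun measurableSet_Ioo fun u hu => ?_
    simp only [rightFrac_indicator_Ioo hα hs.1 hs.2 hu.1.le,
      rightFrac_indicator_Ioo hα ht.1 ht.2 hu.1.le]
  · have hgram : ∀ s ∈ Icc (0 : ℝ) T, ∀ t ∈ Icc (0 : ℝ) T, ∫ ω, W s ω * W t ω ∂P =
        ∫ u in Ioo 0 T, liouvilleKernel (β - 1 / 2) s u * liouvilleKernel (β - 1 / 2) t u :=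
      fun s hs t ht => by rw [hWcov s hs t ht, integral_liouvilleKernel_mul_eq_fbmCov hβ hs.2]
    simp_rw [rightFrac_sum_indicator_Ioc hα A B c (fun j => (hAB j).2.1.le) (fun j => (hAB j).2.2)]
    exact integral_sq_sum_increments_eq hW2
      (fun t _ => memLp_liouvilleKernel hα.le t 2 0 T) hgram
      (fun j => ⟨(hAB j).1, (hAB j).2.1.le.trans (hAB j).2.2⟩)
      (fun j => ⟨(hAB j).1.trans (hAB j).2.1.le, (hAB j).2.2⟩) c

theorem ito_isometry_liouville_fbm_large_hurst
    {Ω : Type*} [MeasurableSpace Ω] (P : Measure Ω) [IsProbabilityMeasure P]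
    (T β : ℝ) (hT : 0 < T) (hβ : 1/2 < β) (hβ' : β < 1)
    (W : ℝ → Ω → ℝ)
    (hW2 : ∀ t ∈ Icc (0 : ℝ) T, MemLp (W t) 2 P)
    (hWmean : ∀ t ∈ Icc (0 : ℝ) T, ∫ ω, W t ω ∂P = 0)
    (hWcov : ∀ s ∈ Icc (0 : ℝ) T, ∀ t ∈ Icc (0 : ℝ) T,
      ∫ ω, W s ω * W t ω ∂P = fbmCov β s t) :
    -- (a) the L²(0,T) inner product of the fractional integrals of indicators
    -- reproduces the covariance
    (∀ s ∈ Icc (0 : ℝ) T, ∀ t ∈ Icc (0 : ℝ) T,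
      ∫ u in Ioo 0 T,
        rightFrac T (β - 1/2) ((Ioo 0 s).indicator fun _ => (1 : ℝ)) u *
        rightFrac T (β - 1/2) ((Ioo 0 t).indicator fun _ => (1 : ℝ)) u
        = fbmCov β s t) ∧
    -- (b) the Itô isometry for step functions
    (∀ (N : ℕ) (A B c : Fin N → ℝ), (∀ j, 0 ≤ A j ∧ A j < B j ∧ B j ≤ T) →
      ∫ ω, (∑ j, c j * (W (B j) ω - W (A j) ω)) ^ 2 ∂P =
        ∫ u in Ioo 0 T,
          (rightFrac T (β - 1/2)
            (fun s => ∑ j, c j * (Ioc (A j) (B j)).indicator (fun _ => (1 : ℝ)) s) u) ^ 2) :=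
  ito_isometry_liouville_fbm_large_hurst_general P T β hβ W hW2 hWcov
end
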